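/- arXiv:1304.6039 — 4 statements merged into one kernel-verified Lean document; each statement's English description precedes it below -/
import Mathlib

section
/- Let T be a D×D matrix over a field K with minimal polynomial of degree D, r and u vectors in K^D such that the sequence S_j = u^t T^j r has minimal polynomial of degree exactly D. Then the D×D Hankel matrix H with entries H_{ij} = S_{i+j} (0 ≤ i,j ≤ D-1) is invertible. -/
/-!
If the Hankel matrix had a nonzero kernel vector `c`, the polynomial `p = ∑ cⱼ Xʲ` (of degree
`< D`) would kill the first `D` terms of the sequence `p • S`, where `X` acts by shifting.
This sequence is again annihilated by the characteristic polynomial of `T`, a monic polynomial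
of degree `D`, so it is determined by its first `D` terms and hence vanishes: `p` annihilates
`S`, contradicting the minimality of `D`.
-/

open Matrix Polynomial Finset

section CommSemiring

variable {R : Type*} [CommSemiring R]

variable (R) in
/-- Via `aeval`, `X` acts on sequences as this shift, so `aeval (seqShift R) p S = 0` says
that `p` annihilates `S`. -/
def seqShift : Module.End R (ℕ → R) := LinearMap.funLeft R R Nat.succ

theorem seqShift_pow_apply (k : ℕ) (S : ℕ → R) (n : ℕ) :
    (seqShift R ^ k) S n = S (n + k) := by
  induction k generalizing S with
  | zero => rfl
  | succ k ih => rw [pow_succ, Module.End.mul_apply, ih]; rfl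

theorem aeval_seqShift_apply (p : R[X]) (S : ℕ → R) (n : ℕ) :
    aeval (seqShift R) p S n = ∑ k ∈ range (p.natDegree + 1), p.coeff k * S (n + k) := by
  simp [aeval_eq_sum_range, seqShift_pow_apply]

theorem aeval_seqShift_map_pow_eq_zero {A : Type*} [Semiring A] [Algebra R A]
    (φ : A →ₗ[R] R) {x : A} {p : R[X]} (hp : aeval x p = 0) :
    aeval (seqShift R) p (fun j => φ (x ^ j)) = 0 := by
  ext n
  rw [aeval_seqShift_apply, Pi.zero_apply, ← map_zero φ, ← mul_zero (x ^ n), ← hp,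
    aeval_eq_sum_range, mul_sum, map_sum]
  simp [pow_add]

theorem hankel_mulVec_apply {D : ℕ} (S : ℕ → R) (c : Fin D → R) (i : Fin D) :
    ((of fun i j : Fin D => S (i + j)) *ᵥ c) i =
      aeval (seqShift R) ((degreeLTEquiv R D).symm c : R[X]) S i := by
  simp [degreeLTEquiv, mulVec, dotProduct, seqShift_pow_apply, mul_comm]

end CommSemiring

theorem eq_zero_of_aeval_seqShift_eq_zero {R : Type*} [CommRing R] {q : R[X]} (hq : q.Monic)
    {g : ℕ → R} (hg : aeval (seqShift R) q g = 0) (h0 : ∀ n < q.natDegree, g n = 0) :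
    g = 0 := by
  let E : LinearRecurrence R := ⟨q.natDegree, fun i => -q.coeff i⟩
  have hE : E.IsSolution g := by
    intro n
    have hn := congrFun hg n
    rw [aeval_seqShift_apply, sum_range_succ, hq.coeff_natDegree, one_mul] at hn
    simp [E, eq_neg_of_add_eq_zero_right hn,
      Fin.sum_univ_eq_sum_range (fun i => q.coeff i * g (n + i))]
  exact (E.eq_iff_eqOn_range_order g 0 hE fun n => by simp).mpr
    fun n hn => h0 n (mem_range.mp hn)

theorem isUnit_hankel_of_monic_annihilator {K : Type*} [Field K] {D : ℕ} {S : ℕ → K}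
    {q : K[X]} (hq : q.Monic) (hqD : q.natDegree ≤ D) (hqS : aeval (seqShift K) q S = 0)
    (hmin : ∀ p : K[X], p ≠ 0 → aeval (seqShift K) p S = 0 → D ≤ p.natDegree) :
    IsUnit (of fun i j : Fin D => S (i + j)) := by
  rw [isUnit_iff_isUnit_det, isUnit_iff_ne_zero]
  intro hdet
  obtain ⟨c, hc0, hc⟩ := exists_mulVec_eq_zero_iff.mpr hdet
  set p := (degreeLTEquiv K D).symm c
  have hp0 : (p : K[X]) ≠ 0 := by simpa [p] using hc0
  have hpS : aeval (seqShift K) (p : K[X]) S = 0 := by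
    refine eq_zero_of_aeval_seqShift_eq_zero hq ?_ fun n hn => ?_
    · rw [← Module.End.mul_apply, ← map_mul, mul_comm, map_mul, Module.End.mul_apply, hqS,
        map_zero]
    · rw [← hankel_mulVec_apply S c ⟨n, by omega⟩, hc, Pi.zero_apply]
  have hpD : (p : K[X]).natDegree < D :=
    (natDegree_lt_iff_degree_lt hp0).mpr (mem_degreeLT.mp p.2)
  exact hpD.not_ge (hmin p hp0 hpS)

theorem hankel_matrix_invertible_general
    (K : Type*) [Field K] (D : ℕ)
    (T : Matrix (Fin D) (Fin D) K) (r u : Fin D → K)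
    (S : ℕ → K) (hS : ∀ j, S j = u ⬝ᵥ ((T ^ j) *ᵥ r))
    -- the minimal polynomial of the sequence `S` has degree exactly `D`:
    -- no nonzero annihilating polynomial has degree `< D`
    (hmin : ∀ p : Polynomial K, p ≠ 0 →
      (∀ j : ℕ, ∑ k ∈ Finset.range (p.natDegree + 1), p.coeff k * S (j + k) = 0) →
      D ≤ p.natDegree) :
    IsUnit (Matrix.of (fun i j : Fin D => S ((i : ℕ) + (j : ℕ)))) := by
  let φ : Matrix (Fin D) (Fin D) K →ₗ[K] K :=
    LinearMap.applyₗ r ∘ₗ LinearMap.applyₗ u ∘ₗ (toLinearMap₂' K).toLinearMap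
  have hSφ : S = fun j => φ (T ^ j) :=
    funext fun j => (hS j).trans (toLinearMap₂'_apply' _ _ _).symm
  refine isUnit_hankel_of_monic_annihilator (charpoly_monic T) (by simp) ?_ fun p hp0 hpS => ?_
  · rw [hSφ]
    exact aeval_seqShift_map_pow_eq_zero φ (aeval_self_charpoly T)
  · exact hmin p hp0 fun j => by rw [← aeval_seqShift_apply, hpS, Pi.zero_apply]

/-- Let `T` be a `D×D` matrix whose minimal polynomial has degree `D`,
and `u, r` vectors such that the linearly recurrent sequence `S j = uᵗ T^j r` has
minimal polynomial of degree exactly `D` (i.e. no nonzero polynomial of degree `< D`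
annihilates `S`).  Then the Hankel matrix `H = (S_{i+j})_{0 ≤ i,j ≤ D-1}` is
invertible. -/
theorem hankel_matrix_invertible
    (K : Type*) [Field K] (D : ℕ)
    (T : Matrix (Fin D) (Fin D) K) (r u : Fin D → K)
    (hT : (minpoly K T).natDegree = D)
    (S : ℕ → K) (hS : ∀ j, S j = u ⬝ᵥ ((T ^ j) *ᵥ r))
    -- the minimal polynomial of the sequence `S` has degree exactly `D`:
    -- no nonzero annihilating polynomial has degree `< D`
    (hmin : ∀ p : Polynomial K, p ≠ 0 →
      (∀ j : ℕ, ∑ k ∈ Finset.range (p.natDegree + 1), p.coeff k * S (j + k) = 0) →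
      D ≤ p.natDegree) :
    IsUnit (Matrix.of (fun i j : Fin D => S ((i : ℕ) + (j : ℕ)))) :=
  hankel_matrix_invertible_general K D T r u S hS hmin
end

section
/- Let I = ⟨f_1,...,f_s⟩ be an ideal of K[x_1,...,x_n] generated by affine polynomials whose homogeneous components of highest degree (f_1^h,...,f_s^h) form a regular sequence. Then the initial ideal of I with respect to the DRL order equals the initial ideal of the homogeneous ideal I^h = ⟨f_1^h,...,f_s^h⟩: in_{DRL}(I) = in_{DRL}(I^h). -/
open MvPolynomial

/-- Regular sequence: each `f i` is not a zero divisor modulo the previous ones. -/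
def IsRegularSeq {K : Type*} [Field K] {n s : ℕ}
    (f : Fin s → MvPolynomial (Fin n) K) : Prop :=
  ∀ i : Fin s, ∀ p : MvPolynomial (Fin n) K,
    p * f i ∈ Ideal.span ((fun j : Fin s => f j) '' {j | j < i}) →
    p ∈ Ideal.span ((fun j : Fin s => f j) '' {j | j < i})

/-- The set of leading monomials (w.r.t. the linear order `lo` on exponent vectors)
of nonzero elements of an ideal `J`; the monomials of the initial ideal `in(J)`. -/
def inMon {K : Type*} [Field K] {n : ℕ} (lo : LinearOrder (Fin n →₀ ℕ))
    (J : Ideal (MvPolynomial (Fin n) K)) : Set (Fin n →₀ ℕ) :=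
  {m | ∃ p ∈ J, p ≠ 0 ∧ m ∈ p.support ∧ ∀ m' ∈ p.support, lo.le m' m}

/-! For a degree-compatible order the leading monomial of `p` is the leading monomial of its
top-degree component, so it suffices to compare top components of elements of `I` and of `Iʰ`.
A top component `∑ bᵢ fᵢʰ` of an element of `Iʰ` is also the top component of `∑ bᵢ fᵢ ∈ I`.
Conversely, write `p ∈ I` as `∑ gᵢ fᵢ` with `D = max deg (gᵢ fᵢ)`. If `D > deg p`, the top parts
of the `gᵢ` form a syzygy of the `fᵢʰ`; by regularity it is a combination of Koszul syzygies
`fⱼʰ eᵢ - fᵢʰ eⱼ`, and subtracting the same combination of `fⱼ eᵢ - fᵢ eⱼ` lowers `D`. So in the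
end `deg (gᵢ fᵢ) ≤ deg p` and the top component of `p` is `∑ (gᵢ)ᵗᵒᵖ fᵢʰ ∈ Iʰ`. -/

section Koszul

variable {R : Type*} [CommRing R]

theorem exists_sum_mul_eq_of_mem_span_image {ι : Type*} [Fintype ι] {F : ι → R} {S : Set ι}
    {x : R} (hx : x ∈ Ideal.span (F '' S)) :
    ∃ b : ι → R, (∀ j ∉ S, b j = 0) ∧ ∑ j, b j * F j = x := by
  obtain ⟨l, hl, rfl⟩ := (Finsupp.mem_span_image_iff_linearCombination R).mp hx
  refine ⟨l, fun j hj => Finsupp.notMem_support_iff.mp fun h => hj (hl h), ?_⟩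
  simp [Finsupp.linearCombination_apply, Finsupp.sum_fintype]

theorem sum_sum_sub_swap_mul_eq_zero {ι : Type*} [Fintype ι] (c : ι → ι → R) (f : ι → R) :
    ∑ i, ∑ j, (c i j - c j i) * f j * f i = 0 := by
  simp only [sub_mul, Finset.sum_sub_distrib]
  rw [Finset.sum_comm (f := fun i j => c j i * f j * f i), sub_eq_zero]
  exact Finset.sum_congr rfl fun i _ => Finset.sum_congr rfl fun j _ => by ring

variable {s : ℕ} {F : Fin s → R}

/- `a i = ∑ j, (c i j - c j i) * F j` says that `a = ∑ i j, c i j • (F j • eᵢ - F i • eⱼ)` is a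
combination of Koszul syzygies. Regularity writes the last possibly nonzero coordinate `a K` as
`∑ j < K, b j * F j`, and subtracting `∑ j, b j • (F j • e_K - F K • eⱼ)` from `a` kills it. -/
theorem exists_koszul_of_sum_mul_eq_zero_of_support_lt
    (hreg : ∀ i, ∀ p : R, p * F i ∈ Ideal.span (F '' Set.Iio i) →
      p ∈ Ideal.span (F '' Set.Iio i)) :
    ∀ k ≤ s, ∀ a : Fin s → R, (∀ i : Fin s, k ≤ (i : ℕ) → a i = 0) → ∑ i, a i * F i = 0 →
      ∃ c : Fin s → Fin s → R, ∀ i, a i = ∑ j, (c i j - c j i) * F j := by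
  intro k
  induction k with
  | zero => exact fun _ a ha _ => ⟨0, fun i => by simp [ha i (Nat.zero_le _)]⟩
  | succ k ih =>
    intro hk a ha hsum
    set K : Fin s := ⟨k, hk⟩
    have hK : a K * F K ∈ Ideal.span (F '' Set.Iio K) := by
      rw [Fintype.sum_eq_add_sum_compl K] at hsum
      rw [eq_neg_of_add_eq_zero_left hsum]
      refine neg_mem (Ideal.sum_mem _ fun i hi => ?_)
      rcases lt_or_gt_of_ne (by simpa using hi : i ≠ K) with hlt | hgt
      · exact Ideal.mul_mem_left _ _ (Ideal.subset_span ⟨i, hlt, rfl⟩)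
      · simp [ha i hgt]
    obtain ⟨b, hb, hbK⟩ := exists_sum_mul_eq_of_mem_span_image (hreg K _ hK)
    have hbK' : b K = 0 := hb K (lt_irrefl K)
    obtain ⟨c, hc⟩ := ih (Nat.le_of_succ_le hk)
      (fun i => a i + b i * F K - if i = K then a K else 0)
      (fun i hi => by
        rcases Nat.lt_or_ge k i with hlt | hle
        · have hi' : i ≠ K := fun h => by simp [h, K] at hlt
          simp [ha i hlt, hb i (not_lt.mpr (le_of_lt hlt)), hi']
        · have hi' : i = K := Fin.ext (le_antisymm hle hi)
          simp [hi', hbK'])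
      (by simp [add_mul, sub_mul, Finset.sum_add_distrib, Finset.sum_sub_distrib, hsum,
        mul_right_comm _ (F K), ← Finset.sum_mul, hbK])
    refine ⟨fun i j => c i j + if i = K then b j else 0, fun i => ?_⟩
    have hsingle : ∑ j, ((if i = K then b j else 0) - if j = K then b i else 0) * F j
        = (if i = K then a K else 0) - b i * F K := by
      simp only [sub_mul, ite_mul, zero_mul, Finset.sum_sub_distrib, Finset.sum_ite_eq',
        Finset.mem_univ, if_true]
      split_ifs <;> simp [hbK]
    calc a i = (a i + b i * F K - if i = K then a K else 0)
          + ((if i = K then a K else 0) - b i * F K) := by ring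
      _ = ∑ j, (c i j - c j i) * F j
          + ∑ j, ((if i = K then b j else 0) - if j = K then b i else 0) * F j := by
        rw [hc i, hsingle]
      _ = _ := by
        rw [← Finset.sum_add_distrib]
        exact Finset.sum_congr rfl fun j _ => by ring

theorem exists_koszul_of_sum_mul_eq_zero
    (hreg : ∀ i, ∀ p : R, p * F i ∈ Ideal.span (F '' Set.Iio i) →
      p ∈ Ideal.span (F '' Set.Iio i))
    {a : Fin s → R} (ha : ∑ i, a i * F i = 0) :
    ∃ c : Fin s → Fin s → R, ∀ i, a i = ∑ j, (c i j - c j i) * F j :=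
  exists_koszul_of_sum_mul_eq_zero_of_support_lt hreg s le_rfl a
    (fun i hi => absurd i.isLt (not_lt.mpr hi)) ha

end Koszul

section Homogeneous

variable {σ R : Type*} [CommRing R]

attribute [local instance] MvPolynomial.gradedAlgebra in
theorem homogeneousComponent_mul_of_isHomogeneous_right {p q : MvPolynomial σ R} {d : ℕ}
    (hq : q.IsHomogeneous d) (e : ℕ) :
    homogeneousComponent e (p * q) = if d ≤ e then homogeneousComponent (e - d) p * q else 0 := by
  rw [← decomposition.decompose'_apply, ← decomposition.decompose'_apply]
  exact DirectSum.coe_decompose_mul_of_right_mem (homogeneousSubmodule σ R) e hq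

theorem exists_degree_eq_add_of_mem_support_mul {p q : MvPolynomial σ R} {x : σ →₀ ℕ}
    (hx : x ∈ (p * q).support) :
    ∃ m ∈ p.support, ∃ m' ∈ q.support, x.degree = m.degree + m'.degree := by
  classical
  obtain ⟨m, hm, m', hm', rfl⟩ := Finset.mem_add.mp (support_mul p q hx)
  exact ⟨m, hm, m', hm', map_add _ _ _⟩

theorem isHomogeneous_of_forall_degree_eq {p : MvPolynomial σ R} {e : ℕ}
    (h : ∀ m ∈ p.support, m.degree = e) : p.IsHomogeneous e := by
  intro m hm
  have hm := h m (mem_support_iff.mpr hm)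
  rw [Finsupp.degree_eq_weight_one] at hm
  exact hm

theorem mem_support_sub_homogeneousComponent {p : MvPolynomial σ R} {e : ℕ} {m : σ →₀ ℕ} :
    m ∈ (p - homogeneousComponent e p).support ↔ m ∈ p.support ∧ m.degree ≠ e := by
  rw [mem_support_iff, mem_support_iff, coeff_sub, coeff_homogeneousComponent]
  split_ifs with h <;> simp [h]

theorem degree_lt_of_mem_support_sub_homogeneousComponent {f : MvPolynomial σ R}
    {m : σ →₀ ℕ} (hm : m ∈ (f - homogeneousComponent f.totalDegree f).support) :
    m.degree < f.totalDegree :=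
  have ⟨hmf, hne⟩ := mem_support_sub_homogeneousComponent.mp hm
  lt_of_le_of_ne (le_totalDegree hmf) hne

theorem homogeneousComponent_mul_of_degree_le {g f : MvPolynomial σ R} {D : ℕ}
    (hg : ∀ m ∈ g.support, m.degree + f.totalDegree ≤ D) :
    homogeneousComponent D (g * f)
      = homogeneousComponent (D - f.totalDegree) g * homogeneousComponent f.totalDegree f := by
  set F := homogeneousComponent f.totalDegree f
  have hlow : homogeneousComponent D (g * (f - F)) = 0 :=
    homogeneousComponent_eq_zero' _ _ fun x hx => by
      obtain ⟨m, hm, m', hm', hx⟩ := exists_degree_eq_add_of_mem_support_mul hx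
      have := hg m hm
      have := degree_lt_of_mem_support_sub_homogeneousComponent hm'
      omega
  rw [show g * f = g * F + g * (f - F) by ring, map_add, hlow, add_zero,
    homogeneousComponent_mul_of_isHomogeneous_right (homogeneousComponent_isHomogeneous _ _)]
  split_ifs with h
  · rfl
  · rw [homogeneousComponent_eq_zero' _ _ fun m hm => absurd (hg m hm) (by omega), zero_mul]

theorem exists_mem_span_homogeneousComponent_eq {ι : Type*} [Fintype ι]
    (f : ι → MvPolynomial σ R) {p : MvPolynomial σ R}
    (hp : p ∈ Ideal.span (Set.range fun i => homogeneousComponent (f i).totalDegree (f i)))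
    (D : ℕ) :
    ∃ r ∈ Ideal.span (Set.range f),
      homogeneousComponent D r = homogeneousComponent D p ∧ r.totalDegree ≤ D := by
  obtain ⟨g, rfl⟩ := Ideal.mem_span_range_iff_exists_fun.mp hp
  set b := fun i =>
    if (f i).totalDegree ≤ D then homogeneousComponent (D - (f i).totalDegree) (g i) else 0
  have hb : ∀ i, ∀ m ∈ (b i).support, m.degree + (f i).totalDegree = D := by
    intro i m hm
    by_cases h : (f i).totalDegree ≤ D
    · simp only [b, h, if_true, support_homogeneousComponent, Finset.mem_filter] at hm
      omega
    · simp [b, h] at hm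
  refine ⟨∑ i, b i * f i,
    Ideal.sum_mem _ fun i _ => Ideal.mul_mem_left _ _ (Ideal.subset_span ⟨i, rfl⟩), ?_, ?_⟩
  · simp only [map_sum]
    refine Finset.sum_congr rfl fun i _ => ?_
    rw [homogeneousComponent_mul_of_degree_le fun m hm => (hb i m hm).le,
      homogeneousComponent_mul_of_isHomogeneous_right (homogeneousComponent_isHomogeneous _ _),
      homogeneousComponent_eq_self
        (isHomogeneous_of_forall_degree_eq fun m hm => by have := hb i m hm; omega)]
    split_ifs with h <;> simp [b, h]
  · refine totalDegree_finsetSum_le fun i _ => ?_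
    by_cases h : (f i).totalDegree ≤ D
    · have := (homogeneousComponent_isHomogeneous (D - (f i).totalDegree) (g i)).totalDegree_le
      refine (totalDegree_mul _ _).trans ?_
      simp only [b, h, if_true]
      omega
    · simp [b, h]

end Homogeneous

section TopComponents

/- Degree bounds are stated on supports, as `m.degree + d ≤ D`, rather than through
`totalDegree`: this way they hold for the zero polynomial and avoid truncated subtraction. -/

variable {σ R : Type*} [CommRing R] {s : ℕ}

theorem exists_homogeneous_koszul_of_sum_mul_eq_zero {F : Fin s → MvPolynomial σ R}
    {d : Fin s → ℕ} (hF : ∀ i, (F i).IsHomogeneous (d i))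
    (hreg : ∀ i, ∀ p, p * F i ∈ Ideal.span (F '' Set.Iio i) → p ∈ Ideal.span (F '' Set.Iio i))
    {D : ℕ} {a : Fin s → MvPolynomial σ R} (ha : ∀ i, ∀ m ∈ (a i).support, m.degree + d i = D)
    (hsum : ∑ i, a i * F i = 0) :
    ∃ c : Fin s → Fin s → MvPolynomial σ R, (∀ i, a i = ∑ j, (c i j - c j i) * F j) ∧
      ∀ i j, ∀ m ∈ (c i j).support, m.degree + d i + d j = D := by
  obtain ⟨c, hc⟩ := exists_koszul_of_sum_mul_eq_zero hreg hsum
  refine ⟨fun i j => if d i + d j ≤ D then homogeneousComponent (D - d i - d j) (c i j) else 0,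
    fun i => ?_, fun i j m hm => ?_⟩
  · by_cases hi : d i ≤ D
    · have hai : (a i).IsHomogeneous (D - d i) :=
        isHomogeneous_of_forall_degree_eq fun m hm => by have := ha i m hm; omega
      rw [← homogeneousComponent_eq_self hai, hc i, map_sum]
      refine Finset.sum_congr rfl fun j _ => ?_
      rw [homogeneousComponent_mul_of_isHomogeneous_right (hF j), map_sub]
      by_cases hj : d i + d j ≤ D
      · simp only [hj, add_comm (d j), if_true, show d j ≤ D - d i by omega, Nat.sub_right_comm D]
      · simp only [hj, add_comm (d j), if_false, show ¬ d j ≤ D - d i by omega, sub_zero,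
          zero_mul]
    · have hai : a i = 0 := support_eq_empty.mp
        (Finset.eq_empty_of_forall_notMem fun m hm => by have := ha i m hm; omega)
      simp [hai, show ∀ j, ¬ d i + d j ≤ D from fun j => by omega,
        show ∀ j, ¬ d j + d i ≤ D from fun j => by omega]
  · dsimp only at hm
    split_ifs at hm with h
    · rw [support_homogeneousComponent, Finset.mem_filter] at hm
      omega
    · simp at hm

theorem exists_repr_degree_lt_of_homogeneousComponent_eq_zero (f : Fin s → MvPolynomial σ R)
    (hreg : ∀ i, ∀ p, p * homogeneousComponent (f i).totalDegree (f i) ∈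
        Ideal.span ((fun j => homogeneousComponent (f j).totalDegree (f j)) '' Set.Iio i) →
      p ∈ Ideal.span ((fun j => homogeneousComponent (f j).totalDegree (f j)) '' Set.Iio i))
    {D : ℕ} {g : Fin s → MvPolynomial σ R}
    (hg : ∀ i, ∀ m ∈ (g i).support, m.degree + (f i).totalDegree ≤ D)
    (htop : homogeneousComponent D (∑ i, g i * f i) = 0) :
    ∃ g' : Fin s → MvPolynomial σ R, ∑ i, g' i * f i = ∑ i, g i * f i ∧
      ∀ i, ∀ m ∈ (g' i).support, m.degree + (f i).totalDegree < D := by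
  classical
  set a := fun i => homogeneousComponent (D - (f i).totalDegree) (g i)
  have ha : ∀ i, ∀ m ∈ (a i).support, m.degree + (f i).totalDegree = D := by
    intro i m hm
    rw [support_homogeneousComponent, Finset.mem_filter] at hm
    have := hg i m hm.1
    omega
  have hsum : ∑ i, a i * homogeneousComponent (f i).totalDegree (f i) = 0 := by
    rw [← htop, map_sum]
    exact Finset.sum_congr rfl fun i _ => (homogeneousComponent_mul_of_degree_le (hg i)).symm
  obtain ⟨c, hc, hcdeg⟩ := exists_homogeneous_koszul_of_sum_mul_eq_zero
    (fun i => homogeneousComponent_isHomogeneous _ _) hreg ha hsum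
  refine ⟨fun i => g i - ∑ j, (c i j - c j i) * f j, ?_, fun i m hm => ?_⟩
  · simp only [sub_mul (g _), Finset.sum_sub_distrib, Finset.sum_mul,
      sum_sum_sub_swap_mul_eq_zero, sub_zero]
  have hg' : g i - ∑ j, (c i j - c j i) * f j
      = (g i - a i)
        - ∑ j, (c i j - c j i) * (f j - homogeneousComponent (f j).totalDegree (f j)) := by
    simp only [hc i, mul_sub, Finset.sum_sub_distrib]
    ring
  dsimp only at hm
  rw [hg'] at hm
  rcases Finset.mem_union.mp (support_sub σ _ _ hm) with hm | hm
  · obtain ⟨hmg, hne⟩ := mem_support_sub_homogeneousComponent.mp hm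
    have := hg i m hmg
    omega
  · obtain ⟨j, -, hj⟩ := Finset.mem_biUnion.mp (support_sum hm)
    obtain ⟨x, hx, y, hy, hm⟩ := exists_degree_eq_add_of_mem_support_mul hj
    have hy := degree_lt_of_mem_support_sub_homogeneousComponent hy
    rcases Finset.mem_union.mp (support_sub σ _ _ hx) with hx | hx
    · have := hcdeg i j x hx
      omega
    · have := hcdeg j i x hx
      omega

theorem exists_repr_degree_le_totalDegree (f : Fin s → MvPolynomial σ R)
    (hreg : ∀ i, ∀ p, p * homogeneousComponent (f i).totalDegree (f i) ∈
        Ideal.span ((fun j => homogeneousComponent (f j).totalDegree (f j)) '' Set.Iio i) →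
      p ∈ Ideal.span ((fun j => homogeneousComponent (f j).totalDegree (f j)) '' Set.Iio i))
    {p : MvPolynomial σ R} (hp : p ∈ Ideal.span (Set.range f)) :
    ∃ g : Fin s → MvPolynomial σ R, ∑ i, g i * f i = p ∧
      ∀ i, ∀ m ∈ (g i).support, m.degree + (f i).totalDegree ≤ p.totalDegree := by
  suffices h : ∀ D, ∀ g : Fin s → MvPolynomial σ R, ∑ i, g i * f i = p →
      (∀ i, ∀ m ∈ (g i).support, m.degree + (f i).totalDegree ≤ D) →
      ∃ g' : Fin s → MvPolynomial σ R, ∑ i, g' i * f i = p ∧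
        ∀ i, ∀ m ∈ (g' i).support, m.degree + (f i).totalDegree ≤ p.totalDegree by
    obtain ⟨g, hg⟩ := Ideal.mem_span_range_iff_exists_fun.mp hp
    refine h (∑ i, ((g i).totalDegree + (f i).totalDegree)) g hg fun i m hm => ?_
    have : m.degree ≤ (g i).totalDegree := le_totalDegree hm
    have := Finset.single_le_sum (f := fun i => (g i).totalDegree + (f i).totalDegree)
      (fun _ _ => Nat.zero_le _) (Finset.mem_univ i)
    omega
  intro D
  induction D with
  | zero => exact fun g hg hbound => ⟨g, hg, fun i m hm => (hbound i m hm).trans (Nat.zero_le _)⟩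
  | succ D ih =>
    intro g hg hbound
    by_cases hD : D + 1 ≤ p.totalDegree
    · exact ⟨g, hg, fun i m hm => (hbound i m hm).trans hD⟩
    obtain ⟨g', hg', hbound'⟩ := exists_repr_degree_lt_of_homogeneousComponent_eq_zero f hreg
      hbound (by rw [hg]; exact homogeneousComponent_eq_zero _ _ (by omega))
    exact ih g' (hg'.trans hg) fun i m hm => Nat.le_of_lt_succ (hbound' i m hm)

theorem homogeneousComponent_totalDegree_mem_span (f : Fin s → MvPolynomial σ R)
    (hreg : ∀ i, ∀ p, p * homogeneousComponent (f i).totalDegree (f i) ∈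
        Ideal.span ((fun j => homogeneousComponent (f j).totalDegree (f j)) '' Set.Iio i) →
      p ∈ Ideal.span ((fun j => homogeneousComponent (f j).totalDegree (f j)) '' Set.Iio i))
    {p : MvPolynomial σ R} (hp : p ∈ Ideal.span (Set.range f)) :
    homogeneousComponent p.totalDegree p
      ∈ Ideal.span (Set.range fun i => homogeneousComponent (f i).totalDegree (f i)) := by
  obtain ⟨g, rfl, hg⟩ := exists_repr_degree_le_totalDegree f hreg hp
  rw [map_sum]
  refine Ideal.sum_mem _ fun i _ => ?_
  rw [homogeneousComponent_mul_of_degree_le (hg i)]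
  exact Ideal.mul_mem_left _ _ (Ideal.subset_span ⟨i, rfl⟩)

end TopComponents

section LeadingMonomial

variable {σ R : Type*} [CommRing R]

def IsLeadingMonomial (lo : LinearOrder (σ →₀ ℕ)) (p : MvPolynomial σ R) (m : σ →₀ ℕ) : Prop :=
  m ∈ p.support ∧ ∀ m' ∈ p.support, lo.le m' m

theorem mem_inMon_iff {K : Type*} [Field K] {n : ℕ} {lo : LinearOrder (Fin n →₀ ℕ)}
    {J : Ideal (MvPolynomial (Fin n) K)} {m : Fin n →₀ ℕ} :
    m ∈ inMon lo J ↔ ∃ p ∈ J, IsLeadingMonomial lo p m :=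
  ⟨fun ⟨p, hp, _, h⟩ => ⟨p, hp, h⟩, fun ⟨p, hp, h⟩ => ⟨p, hp, support_nonempty.mp ⟨m, h.1⟩, h⟩⟩

variable {lo : LinearOrder (σ →₀ ℕ)} {p q : MvPolynomial σ R} {m : σ →₀ ℕ}

theorem IsLeadingMonomial.degree_eq_totalDegree
    (hdeg : ∀ m m' : σ →₀ ℕ, m.degree < m'.degree → lo.lt m m')
    (h : IsLeadingMonomial lo p m) : m.degree = p.totalDegree := by
  obtain ⟨m₀, hm₀, hsup⟩ := Finset.exists_mem_eq_sup p.support ⟨m, h.1⟩ Finsupp.degree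
  refine le_antisymm (le_totalDegree h.1) (not_lt.mp fun hlt => ?_)
  have hlt : m.degree < m₀.degree := by rwa [← hsup]
  exact ((lo.lt_iff_le_not_ge m m₀).mp (hdeg m m₀ hlt)).2 (h.2 m₀ hm₀)

theorem IsLeadingMonomial.of_homogeneousComponent_eq
    (hdeg : ∀ m m' : σ →₀ ℕ, m.degree < m'.degree → lo.lt m m')
    (h : IsLeadingMonomial lo p m)
    (hq : homogeneousComponent p.totalDegree q = homogeneousComponent p.totalDegree p)
    (hqdeg : q.totalDegree ≤ p.totalDegree) : IsLeadingMonomial lo q m := by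
  have hcoeff : ∀ m', m'.degree = p.totalDegree → coeff m' q = coeff m' p := fun m' hm' => by
    simpa [coeff_homogeneousComponent, hm'] using congrArg (coeff m') hq
  have hmD := h.degree_eq_totalDegree hdeg
  refine ⟨mem_support_iff.mpr ((hcoeff m hmD).trans_ne (mem_support_iff.mp h.1)), fun m' hm' => ?_⟩
  have hm'D : m'.degree ≤ p.totalDegree := (le_totalDegree hm').trans hqdeg
  rcases hm'D.lt_or_eq with hlt | heq
  · exact ((lo.lt_iff_le_not_ge m' m).mp (hdeg m' m (hmD ▸ hlt))).1
  · exact h.2 m' (mem_support_iff.mpr ((hcoeff m' heq).symm.trans_ne (mem_support_iff.mp hm')))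

end LeadingMonomial

theorem initial_ideal_eq_initial_of_top_components_general
    (K : Type*) [Field K] (n s : ℕ)
    (lo : LinearOrder (Fin n →₀ ℕ))
    -- degree-compatible monomial order (e.g. DRL)
    (hdeg : ∀ m m' : Fin n →₀ ℕ,
      m.sum (fun _ e => e) < m'.sum (fun _ e => e) → lo.lt m m')
    (f : Fin s → MvPolynomial (Fin n) K)
    (hreg : IsRegularSeq (fun i => homogeneousComponent (f i).totalDegree (f i))) :
    inMon lo (Ideal.span (Set.range f)) =
      inMon lo (Ideal.span
        (Set.range (fun i => homogeneousComponent (f i).totalDegree (f i)))) := by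
  ext m
  simp only [mem_inMon_iff]
  constructor
  · rintro ⟨p, hp, hm⟩
    refine ⟨_, homogeneousComponent_totalDegree_mem_span f hreg hp,
      hm.of_homogeneousComponent_eq hdeg ?_ (homogeneousComponent_isHomogeneous _ _).totalDegree_le⟩
    exact homogeneousComponent_eq_self (homogeneousComponent_isHomogeneous _ _)
  · rintro ⟨p, hp, hm⟩
    obtain ⟨r, hr, hrp, hrdeg⟩ := exists_mem_span_homogeneousComponent_eq f hp p.totalDegree
    exact ⟨r, hr, hm.of_homogeneousComponent_eq hdeg hrp hrdeg⟩

/-- Let `I = ⟨f₁,…,f_s⟩` be generated by affine polynomials whose top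
homogeneous components `(f₁ʰ,…,f_sʰ)` form a regular sequence.  Then, for the DRL order
(any degree-compatible monomial order), the initial ideal of `I` equals the initial
ideal of `Iʰ = ⟨f₁ʰ,…,f_sʰ⟩`. -/
theorem initial_ideal_eq_initial_of_top_components
    (K : Type*) [Field K] (n s : ℕ)
    (lo : LinearOrder (Fin n →₀ ℕ))
    -- degree-compatible monomial order (e.g. DRL)
    (hdeg : ∀ m m' : Fin n →₀ ℕ,
      m.sum (fun _ e => e) < m'.sum (fun _ e => e) → lo.lt m m')
    (hmul : ∀ m m' d : Fin n →₀ ℕ, lo.le m m' → lo.le (m + d) (m' + d))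
    (f : Fin s → MvPolynomial (Fin n) K) (hne : ∀ i, f i ≠ 0)
    (hreg : IsRegularSeq (fun i => homogeneousComponent (f i).totalDegree (f i))) :
    inMon lo (Ideal.span (Set.range f)) =
      inMon lo (Ideal.span
        (Set.range (fun i => homogeneousComponent (f i).totalDegree (f i)))) :=
  initial_ideal_eq_initial_of_top_components_general K n s lo hdeg f hreg
end

section
/- Let I be a zero-dimensional ideal of K[x_1,...,x_n] and suppose its minimal monomial generators E(I) of the DRL initial ideal satisfy the Borel-type property: for every generator m divisible by x_n, and every k < n, the monomial x_k·m/x_n lies in the initial ideal in_{DRL}(I). Then for every standard monomial ε (i.e., ε ∉ in_{DRL}(I)), the monomial x_n·ε is either a standard monomial or a minimal generator of in_{DRL}(I); i.e., x_n·ε cannot be a non-minimal element of the initial ideal. -/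
/-!
Write `μ = ε · xₗ` and suppose `μ / x_k ∈ S` for some `k ≠ l`. A generator `e ∣ μ / x_k`
satisfies `e · x_k ∣ ε · xₗ`. If `xₗ ∤ e` then already `e ∣ ε`; otherwise the Borel move
`e · x_k / xₗ` stays in `S` and divides `ε`. Either way the standard monomial `ε` would lie
in `S`. For `k = l` there is nothing to prove, since `μ / xₗ = ε`.
-/

open Finsupp

variable {σ : Type*}

namespace Finsupp

theorem le_of_add_single_le_add_single {e ε : σ →₀ ℕ} {l k : σ} (hel : e l = 0)
    (h : e + single k 1 ≤ ε + single l 1) : e ≤ ε := by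
  intro i
  by_cases hil : l = i
  · simp [← hil, hel]
  · have hi := h i
    rw [add_apply, add_apply, single_eq_of_ne' hil] at hi
    omega

theorem tsub_single_add_single_le {e ε : σ →₀ ℕ} {l k : σ} (hel : e l ≠ 0)
    (h : e + single k 1 ≤ ε + single l 1) : e - single l 1 + single k 1 ≤ ε := by
  have hl : single l 1 ≤ e := single_le_iff.mpr (Nat.one_le_iff_ne_zero.mpr hel)
  rw [tsub_add_eq_add_tsub hl]
  exact tsub_le_iff_right.mpr h

end Finsupp

theorem add_single_tsub_single_notMem_of_borel {S G : Set (σ →₀ ℕ)} (hS : IsUpperSet S)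
    (hGS : G ⊆ S) (hgen : ∀ m ∈ S, ∃ e ∈ G, e ≤ m) {l k : σ}
    (hborel : ∀ e ∈ G, e l ≠ 0 → e - single l 1 + single k 1 ∈ S)
    {ε : σ →₀ ℕ} (hε : ε ∉ S) (hk : ε k ≠ 0) : ε + single l 1 - single k 1 ∉ S := by
  intro hmem
  obtain ⟨e, heG, hle⟩ := hgen _ hmem
  have hk_le : single k 1 ≤ ε + single l 1 :=
    single_le_iff.mpr (by simp only [coe_add, Pi.add_apply]; omega)
  have hdiv : e + single k 1 ≤ ε + single l 1 := (le_tsub_iff_right hk_le).mp hle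
  apply hε
  by_cases hel : e l = 0
  · exact hS (le_of_add_single_le_add_single hel hdiv) (hGS heG)
  · exact hS (tsub_single_add_single_le hel hdiv) (hborel e heG hel)

/-- Let `S ⊆ (Fin (n+1) →₀ ℕ)` be the set of monomials of the DRL
initial ideal of a zero-dimensional ideal (so `S` is closed under multiplication by
monomials and every element of `S` is divisible by a minimal generator), and let
`E = {m ∈ S : ∀ k, m_k > 0 → m / x_k ∉ S}` be its set of minimal generators.  Assume
the Borel-type property: for every `m ∈ E` divisible by the last variable `xₙ` and every
`k < n`, the monomial `x_k · m / xₙ` lies in `S`.  Then for every standard monomial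
`ε ∉ S`, if `xₙ · ε ∈ S` then `xₙ · ε` is a minimal generator, i.e. `xₙ · ε ∈ E`. -/
theorem borel_frontier_minimal_generator
    (n : ℕ)
    (S : Set (Fin (n + 1) →₀ ℕ))
    -- `S` is upward closed (the monomial set of a monomial ideal)
    (hup : ∀ m ∈ S, ∀ d : Fin (n + 1) →₀ ℕ, m + d ∈ S)
    -- every monomial of `S` is divisible by a minimal generator
    (hgen : ∀ m ∈ S, ∃ e, (e ∈ S ∧ ∀ k : Fin (n + 1), e k ≠ 0 →
        e - single k 1 ∉ S) ∧ e ≤ m)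
    -- Borel-type property of the minimal generators
    (hborel : ∀ m ∈ S, (∀ k : Fin (n + 1), m k ≠ 0 → m - single k 1 ∉ S) →
      m (Fin.last n) ≠ 0 →
      ∀ k : Fin n, m - single (Fin.last n) 1 + single k.castSucc 1 ∈ S) :
    ∀ ε : Fin (n + 1) →₀ ℕ, ε ∉ S → ε + single (Fin.last n) 1 ∈ S →
      ∀ k : Fin (n + 1), ((ε + single (Fin.last n) 1 : Fin (n + 1) →₀ ℕ)) k ≠ 0 →
        (ε + single (Fin.last n) 1) - single k 1 ∉ S := by
  intro ε hε _ k hk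
  have hS : IsUpperSet S := fun a b hab ha => by
    obtain ⟨d, rfl⟩ := le_iff_exists_add.mp hab
    exact hup a ha d
  rcases eq_or_ne k (Fin.last n) with rfl | hk_last
  · rwa [add_tsub_cancel_right]
  obtain ⟨k, rfl⟩ : ∃ k' : Fin n, k = k'.castSucc := ⟨k.castPred hk_last, by simp⟩
  have hεk : ε k.castSucc ≠ 0 := by simpa [single_apply, hk_last.symm] using hk
  exact add_single_tsub_single_notMem_of_borel hS (fun _ he => he.1) hgen
    (fun e he hel => hborel e he.1 he.2 hel k) hε hεk
end

section
/- Let f_1,...,f_s ∈ K[x_1,...,x_n] be affine polynomials such that the homogeneous components of highest degree (f_1^h,...,f_s^h) form a regular sequence, and let f ∈ ⟨f_1,...,f_s⟩ be nonzero. Write f = Σ h_i f_i with deg(h_i f_i) ≤ deg(f) for all i (such a representation exists by regularity). Then the polynomial Σ h_i f_i^h, taken over indices i with deg(h_i f_i) = deg(f) and restricted to top-degree components, is a nonzero element of ⟨f_1^h,...,f_s^h⟩ with the same DRL leading term as f. Consequently in_{DRL}(⟨f_1,...,f_s⟩) ⊆ in_{DRL}(⟨f_1^h,...,f_s^h⟩).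 -/
/-!
Write `pʰ` for the homogeneous component of `p` of degree `deg p`. If `f = ∑ hᵢ fᵢ` with
`deg (hᵢ fᵢ) ≤ deg f`, taking components of degree `deg f` gives
`fʰ = ∑_{deg (hᵢ fᵢ) = deg f} hᵢʰ fᵢʰ`, and for a degree-compatible order the leading monomial
of `f` already lies in `fʰ`.

Such degree-bounded representations exist because the `fᵢʰ` form a regular sequence. Let
`D = max deg (hᵢ fᵢ) > deg f` and let `k` be the largest index whose term reaches degree `D`.
The degree-`D` parts cancel, so `hₖʰ fₖʰ ∈ ⟨fⱼʰ : j < k⟩`, hence by regularity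
`hₖʰ = ∑_{j<k} aⱼ fⱼʰ` with homogeneous `aⱼ`. Replacing `hₖ` by `hₖ - ∑ aⱼ fⱼ` and `hⱼ` by
`hⱼ + aⱼ fₖ` keeps the sum, drops the degree of the `k`-th term below `D`, and leaves the
terms of index above `k` untouched; induct on `k`, then on `D`.
-/

open MvPolynomial

local notation:max p "ʰ" => homogeneousComponent (totalDegree p) p

def IsWeaklyRegularFamily {A ι : Type*} [CommSemiring A] [LT ι] (F : ι → A) : Prop :=
  ∀ k p, p * F k ∈ Ideal.span (F '' {j | j < k}) → p ∈ Ideal.span (F '' {j | j < k})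

theorem sum_add_mul_sub_ite_mul {A ι : Type*} [CommRing A] [Fintype ι] [DecidableEq ι]
    (h a f : ι → A) (k : ι) :
    ∑ i, (h i + a i * f k - if i = k then ∑ j, a j * f j else 0) * f i = ∑ i, h i * f i := by
  have hterm : ∀ i, (h i + a i * f k - if i = k then ∑ j, a j * f j else 0) * f i =
      h i * f i + f k * (a i * f i) - if i = k then (∑ j, a j * f j) * f k else 0 := by
    intro i
    split_ifs with hi
    · rw [hi]; ring
    · ring
  rw [Finset.sum_congr rfl fun i _ => hterm i, Finset.sum_sub_distrib, Finset.sum_add_distrib,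
    ← Finset.mul_sum, Finset.sum_ite_eq', if_pos (Finset.mem_univ k)]
  ring

namespace MvPolynomial

variable {σ R : Type*}

section CommSemiring

variable [CommSemiring R]

attribute [local instance] MvPolynomial.gradedAlgebra in
theorem homogeneousComponent_mul_of_isHomogeneous_right (a : MvPolynomial σ R)
    {F : MvPolynomial σ R} {d : ℕ} (hF : F.IsHomogeneous d) (e : ℕ) :
    homogeneousComponent e (a * F) =
      if d ≤ e then homogeneousComponent (e - d) a * F else 0 := by
  simp only [← decomposition.decompose'_apply]
  exact DirectSum.coe_decompose_mul_of_right_mem (homogeneousSubmodule σ R) e (b := F) hF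

theorem homogeneousComponent_add_totalDegree_mul {p : MvPolynomial σ R} {a : ℕ}
    (hp : p.totalDegree ≤ a) (q : MvPolynomial σ R) :
    homogeneousComponent (a + q.totalDegree) (p * q) = homogeneousComponent a p * qʰ := by
  conv_lhs => enter [2, 2]; rw [← sum_homogeneousComponent q]
  rw [Finset.mul_sum, map_sum,
    Finset.sum_eq_single_of_mem q.totalDegree (Finset.self_mem_range_succ _)]
  · rw [homogeneousComponent_mul_of_isHomogeneous_right p
      (homogeneousComponent_isHomogeneous _ q), if_pos (Nat.le_add_left _ _), Nat.add_sub_cancel]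
  · intro j hj hjne
    have hjq : j < q.totalDegree := by grind
    rw [homogeneousComponent_mul_of_isHomogeneous_right p (homogeneousComponent_isHomogeneous j q),
      if_pos (by omega), homogeneousComponent_eq_zero _ _ (by omega), zero_mul]

theorem exists_mem_support_degree_eq_totalDegree {p : MvPolynomial σ R} (hp : p ≠ 0) :
    ∃ m ∈ p.support, m.degree = p.totalDegree := by
  obtain ⟨m, hm, hmax⟩ := p.support.exists_mem_eq_sup (support_nonempty.2 hp) Finsupp.degree
  exact ⟨m, hm, hmax.symm⟩

theorem homogeneousComponent_totalDegree_ne_zero {p : MvPolynomial σ R} (hp : p ≠ 0) :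
    pʰ ≠ 0 := by
  obtain ⟨m, hm, hdeg⟩ := exists_mem_support_degree_eq_totalDegree hp
  have hm' : m ∈ pʰ.support := by
    rw [support_homogeneousComponent]
    exact Finset.mem_filter.2 ⟨hm, hdeg⟩
  exact fun h0 => by simp [h0] at hm'

theorem totalDegree_lt_of_homogeneousComponent_eq_zero {p : MvPolynomial σ R} {e : ℕ}
    (hle : p.totalDegree ≤ e) (h0 : homogeneousComponent e p = 0) (he : 0 < e) :
    p.totalDegree < e := by
  rcases eq_or_ne p 0 with rfl | hp
  · rwa [totalDegree_zero]
  · refine lt_of_le_of_ne hle fun hpe => ?_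
    exact homogeneousComponent_totalDegree_ne_zero hp (hpe ▸ h0)

theorem exists_isHomogeneous_of_mem_span {ι : Type*} [Fintype ι] {F : ι → MvPolynomial σ R}
    {d : ι → ℕ} {S : Set ι} {p : MvPolynomial σ R} {e : ℕ}
    (hF : ∀ j, (F j).IsHomogeneous (d j)) (hp : p.IsHomogeneous e)
    (hmem : p ∈ Ideal.span (F '' S)) :
    ∃ a : ι → MvPolynomial σ R, (∀ j ∉ S, a j = 0) ∧ (∀ j, (a j).IsHomogeneous (e - d j)) ∧
      (∀ j, e < d j → a j = 0) ∧ p = ∑ j, a j * F j := by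
  classical
  obtain ⟨l, hlS, rfl⟩ := (Finsupp.mem_span_image_iff_linearCombination _).1 hmem
  refine ⟨fun j => if d j ≤ e then homogeneousComponent (e - d j) (l j) else 0,
    fun j hj => ?_, fun j => ?_, fun j hj => if_neg (by omega), ?_⟩
  · have hlj : l j = 0 :=
      Finsupp.notMem_support_iff.1 fun hl => hj ((Finsupp.mem_supported _ _).1 hlS hl)
    simp [hlj]
  · dsimp only
    split_ifs
    exacts [homogeneousComponent_isHomogeneous _ _, isHomogeneous_zero _ _ _]
  · conv_lhs => rw [← homogeneousComponent_eq_self hp]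
    rw [Finsupp.linearCombination_apply, Finsupp.sum_fintype _ _ (by simp), map_sum]
    refine Finset.sum_congr rfl fun j _ => ?_
    rw [smul_eq_mul, homogeneousComponent_mul_of_isHomogeneous_right _ (hF j)]
    by_cases hde : d j ≤ e <;> simp [hde]

theorem exists_sum_mul_of_mem_span_homogeneousComponent {ι : Type*} [Fintype ι]
    {f : ι → MvPolynomial σ R} {S : Set ι} {p : MvPolynomial σ R} {e : ℕ}
    (hp : p.IsHomogeneous e) (hmem : p ∈ Ideal.span ((fun j => (f j)ʰ) '' S)) :
    ∃ a : ι → MvPolynomial σ R, (∀ j ∉ S, a j = 0) ∧ (∀ j, (a j * f j).totalDegree ≤ e) ∧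
      homogeneousComponent e (∑ j, a j * f j) = p := by
  obtain ⟨a, ha_S, ha_hom, ha_deg, rfl⟩ :=
    exists_isHomogeneous_of_mem_span (fun j => homogeneousComponent_isHomogeneous _ (f j)) hp hmem
  have ha : ∀ j, (a j * f j).totalDegree ≤ e ∧
      homogeneousComponent e (a j * f j) = a j * (f j)ʰ := by
    intro j
    by_cases hj : (f j).totalDegree ≤ e
    · have hej : e = (e - (f j).totalDegree) + (f j).totalDegree := by omega
      refine ⟨(totalDegree_mul _ _).trans ?_, ?_⟩
      · have := (ha_hom j).totalDegree_le
        omega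
      · rw [hej, homogeneousComponent_add_totalDegree_mul (ha_hom j).totalDegree_le,
          homogeneousComponent_eq_self (ha_hom j)]
    · simp [ha_deg j (by omega)]
  refine ⟨a, ha_S, fun j => (ha j).1, ?_⟩
  rw [map_sum]
  exact Finset.sum_congr rfl fun j _ => (ha j).2

def IsLeadingMonomial (lo : LinearOrder (σ →₀ ℕ)) (p : MvPolynomial σ R) (m : σ →₀ ℕ) : Prop :=
  m ∈ p.support ∧ ∀ m' ∈ p.support, lo.le m' m

theorem exists_isLeadingMonomial (lo : LinearOrder (σ →₀ ℕ)) {p : MvPolynomial σ R}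
    (hp : p ≠ 0) : ∃ m, IsLeadingMonomial lo p m := by
  let _ := lo
  obtain ⟨m, hm, hmax⟩ := p.support.exists_max_image id (support_nonempty.2 hp)
  exact ⟨m, hm, hmax⟩

theorem IsLeadingMonomial.degree_eq_totalDegree {lo : LinearOrder (σ →₀ ℕ)}
    (hlo : ∀ m m' : σ →₀ ℕ, m.degree < m'.degree → lo.lt m m') {p : MvPolynomial σ R}
    {m : σ →₀ ℕ} (hm : IsLeadingMonomial lo p m) : m.degree = p.totalDegree := by
  obtain ⟨m₀, hm₀, hdeg₀⟩ :=
    exists_mem_support_degree_eq_totalDegree (ne_zero_iff.2 ⟨m, mem_support_iff.1 hm.1⟩)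
  refine le_antisymm (le_totalDegree hm.1) (hdeg₀ ▸ not_lt.1 fun hlt => ?_)
  exact ((lo.lt_iff_le_not_ge _ _).1 (hlo m m₀ hlt)).2 (hm.2 m₀ hm₀)

theorem IsLeadingMonomial.homogeneousComponent_totalDegree {lo : LinearOrder (σ →₀ ℕ)}
    (hlo : ∀ m m' : σ →₀ ℕ, m.degree < m'.degree → lo.lt m m') {p : MvPolynomial σ R}
    {m : σ →₀ ℕ} (hm : IsLeadingMonomial lo p m) : IsLeadingMonomial lo pʰ m := by
  rw [IsLeadingMonomial, support_homogeneousComponent]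
  exact ⟨Finset.mem_filter.2 ⟨hm.1, hm.degree_eq_totalDegree hlo⟩,
    fun m' hm' => hm.2 m' (Finset.mem_filter.1 hm').1⟩

end CommSemiring

section NoZeroDivisors

variable [CommSemiring R] [NoZeroDivisors R]

theorem homogeneousComponent_totalDegree_mul (p q : MvPolynomial σ R) : (p * q)ʰ = pʰ * qʰ := by
  rcases eq_or_ne p 0 with rfl | hp
  · simp
  rcases eq_or_ne q 0 with rfl | hq
  · simp
  rw [totalDegree_mul_of_isDomain hp hq, homogeneousComponent_add_totalDegree_mul le_rfl]

theorem homogeneousComponent_sum_mul_of_totalDegree_le {ι : Type*} [Fintype ι]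
    {h f : ι → MvPolynomial σ R} {D : ℕ} (hle : ∀ i, (h i * f i).totalDegree ≤ D) :
    homogeneousComponent D (∑ i, h i * f i) =
      ∑ i with (h i * f i).totalDegree = D, (h i)ʰ * (f i)ʰ := by
  rw [map_sum, Finset.sum_filter]
  refine Finset.sum_congr rfl fun i _ => ?_
  split_ifs with hi
  · rw [← hi, homogeneousComponent_totalDegree_mul]
  · exact homogeneousComponent_eq_zero _ _ ((hle i).lt_of_ne hi)

end NoZeroDivisors

section Representation

variable [CommRing R] [NoZeroDivisors R] {ι : Type*} [Fintype ι] [LinearOrder ι]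
  {f : ι → MvPolynomial σ R} {g : MvPolynomial σ R} {D : ℕ}

theorem homogeneousComponent_totalDegree_mul_mem_span {h : ι → MvPolynomial σ R} {k : ι}
    (hgD : g.totalDegree < D) (hg : g = ∑ i, h i * f i)
    (hle : ∀ i, (h i * f i).totalDegree ≤ D) (hgt : ∀ i, k < i → (h i * f i).totalDegree < D)
    (hk : (h k * f k).totalDegree = D) :
    (h k)ʰ * (f k)ʰ ∈ Ideal.span ((fun j => (f j)ʰ) '' {j | j < k}) := by
  have hsum : ∑ i with (h i * f i).totalDegree = D, (h i)ʰ * (f i)ʰ = 0 := by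
    rw [← homogeneousComponent_sum_mul_of_totalDegree_le hle, ← hg,
      homogeneousComponent_eq_zero _ _ hgD]
  rw [← Finset.add_sum_erase _ _ (Finset.mem_filter.2 ⟨Finset.mem_univ k, hk⟩),
    add_eq_zero_iff_eq_neg] at hsum
  rw [hsum]
  refine neg_mem (Ideal.sum_mem _ fun i hi =>
    Ideal.mul_mem_left _ _ (Ideal.subset_span ⟨i, ?_, rfl⟩))
  obtain ⟨hik, hi⟩ := Finset.mem_erase.1 hi
  exact lt_of_le_of_ne (not_lt.1 fun hki => (hgt i hki).ne (Finset.mem_filter.1 hi).2) hik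

theorem exists_sum_mul_eq_totalDegree_lt_of_le {h : ι → MvPolynomial σ R} {k : ι}
    (hreg : IsWeaklyRegularFamily fun j => (f j)ʰ)
    (hgD : g.totalDegree < D) (hg : g = ∑ i, h i * f i)
    (hle : ∀ i, (h i * f i).totalDegree ≤ D) (hgt : ∀ i, k < i → (h i * f i).totalDegree < D)
    (hk : (h k * f k).totalDegree = D) :
    ∃ h' : ι → MvPolynomial σ R, g = ∑ i, h' i * f i ∧ (∀ i, (h' i * f i).totalDegree ≤ D) ∧
      ∀ i, k ≤ i → (h' i * f i).totalDegree < D := by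
  classical
  set e := (h k).totalDegree
  have hD : 0 < D := by omega
  have hhf : h k * f k ≠ 0 := fun h0 => by rw [h0, totalDegree_zero] at hk; omega
  have hDe : D = e + (f k).totalDegree := by
    rw [← hk, totalDegree_mul_of_isDomain (left_ne_zero_of_mul hhf) (right_ne_zero_of_mul hhf)]
  obtain ⟨a, ha_lt, ha_deg, hT_top⟩ := exists_sum_mul_of_mem_span_homogeneousComponent
    (homogeneousComponent_isHomogeneous e (h k))
    (hreg k _ (homogeneousComponent_totalDegree_mul_mem_span hgD hg hle hgt hk))
  set T := ∑ j, a j * f j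
  have hT_deg : T.totalDegree ≤ e := totalDegree_finsetSum_le fun j _ => ha_deg j
  have hk' : ((h k - T) * f k).totalDegree < D := by
    have hle' : (h k - T).totalDegree ≤ e := (totalDegree_sub _ _).trans (max_le le_rfl hT_deg)
    refine totalDegree_lt_of_homogeneousComponent_eq_zero ?_ ?_ hD
    · exact (totalDegree_mul _ _).trans (by omega)
    · rw [hDe, homogeneousComponent_add_totalDegree_mul hle', map_sub, hT_top, sub_self, zero_mul]
  have hle' : ∀ i, ((h i + a i * f k) * f i).totalDegree ≤ D := fun i => by
    rw [add_mul, mul_right_comm]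
    refine (totalDegree_add _ _).trans (max_le (hle i) ((totalDegree_mul _ _).trans ?_))
    have := ha_deg i
    omega
  have hak : a k = 0 := ha_lt k (lt_irrefl k)
  refine ⟨fun i => h i + a i * f k - if i = k then T else 0,
    hg.trans (sum_add_mul_sub_ite_mul h a f k).symm, fun i => ?_, fun i hki => ?_⟩
  · by_cases hi : i = k
    · subst hi
      simpa [hak] using hk'.le
    · simpa [hi] using hle' i
  · obtain rfl | hki := hki.eq_or_lt
    · simpa [hak] using hk'
    · simpa [hki.ne', ha_lt i (lt_asymm hki)] using hgt i hki

theorem exists_sum_mul_eq_totalDegree_lt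
    (hreg : IsWeaklyRegularFamily fun j => (f j)ʰ)
    (hgD : g.totalDegree < D) {h : ι → MvPolynomial σ R}
    (hg : g = ∑ i, h i * f i) (hle : ∀ i, (h i * f i).totalDegree ≤ D) :
    ∃ h' : ι → MvPolynomial σ R, g = ∑ i, h' i * f i ∧ ∀ i, (h' i * f i).totalDegree < D := by
  classical
  obtain ⟨b, hb⟩ : ∃ b, (Finset.univ.filter fun i => (h i * f i).totalDegree = D).max = b :=
    ⟨_, rfl⟩
  induction b using WellFoundedLT.induction generalizing h with
  | ind b ih =>
    set atD := Finset.univ.filter fun i => (h i * f i).totalDegree = D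
    have hmem : ∀ i, i ∈ atD ↔ (h i * f i).totalDegree = D := by simp [atD]
    rcases atD.eq_empty_or_nonempty with hempty | hne
    · refine ⟨h, hg, fun i => (hle i).lt_of_ne fun hi => ?_⟩
      simpa [hempty] using (hmem i).2 hi
    set k := atD.max' hne
    have hgt : ∀ i, k < i → (h i * f i).totalDegree < D := fun i hki =>
      (hle i).lt_of_ne fun hi => (atD.le_max' i ((hmem i).2 hi)).not_gt hki
    obtain ⟨h', hg', hle', hlt'⟩ := exists_sum_mul_eq_totalDegree_lt_of_le hreg hgD hg hle hgt
      ((hmem k).1 (atD.max'_mem hne))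
    refine ih _ ?_ hg' hle' rfl
    rw [← hb, ← Finset.coe_max' hne, Finset.max_eq_sup_withBot,
      Finset.sup_lt_iff (WithBot.bot_lt_coe _)]
    exact fun i hi => WithBot.coe_lt_coe.2 (not_le.1 fun hki => (hlt' i hki).ne
      (Finset.mem_filter.1 hi).2)

theorem exists_sum_mul_eq_totalDegree_le_of_mem_span
    (hreg : IsWeaklyRegularFamily fun j => (f j)ʰ)
    (hg : g ∈ Ideal.span (Set.range f)) :
    ∃ h : ι → MvPolynomial σ R, g = ∑ i, h i * f i ∧
      ∀ i, (h i * f i).totalDegree ≤ g.totalDegree := by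
  obtain ⟨c, hc⟩ := (Submodule.mem_span_range_iff_exists_fun _).1 hg
  suffices ∀ D (h : ι → MvPolynomial σ R), g = ∑ i, h i * f i →
      (∀ i, (h i * f i).totalDegree ≤ D) →
      ∃ h' : ι → MvPolynomial σ R, g = ∑ i, h' i * f i ∧
        ∀ i, (h' i * f i).totalDegree ≤ g.totalDegree from
    this _ c (by simpa using hc.symm) fun i => Finset.le_sup (f := fun i => (c i * f i).totalDegree)
      (Finset.mem_univ i)
  intro D
  induction D with
  | zero => exact fun h hg hle => ⟨h, hg, fun i => (hle i).trans (Nat.zero_le _)⟩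
  | succ D ih =>
    intro h hg hle
    by_cases hD : D + 1 ≤ g.totalDegree
    · exact ⟨h, hg, fun i => (hle i).trans hD⟩
    · obtain ⟨h', hg', hlt⟩ := exists_sum_mul_eq_totalDegree_lt hreg (not_le.1 hD) hg hle
      exact ih h' hg' fun i => Nat.lt_succ_iff.1 (hlt i)

end Representation

end MvPolynomial

theorem top_component_leading_term_general
    (K : Type*) [Field K] (n s : ℕ)
    (lo : LinearOrder (Fin n →₀ ℕ))
    -- DRL: a degree-compatible monomial order
    (hdegcomp : ∀ m m' : Fin n →₀ ℕ,
      m.sum (fun _ e => e) < m'.sum (fun _ e => e) → lo.lt m m')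
    (f_ : Fin s → MvPolynomial (Fin n) K)
    -- the top homogeneous components form a regular sequence
    (hreg : ∀ i : Fin s, ∀ p : MvPolynomial (Fin n) K,
      p * homogeneousComponent (f_ i).totalDegree (f_ i) ∈
        Ideal.span ((fun j => homogeneousComponent (f_ j).totalDegree (f_ j)) '' {j | j < i}) →
      p ∈ Ideal.span
        ((fun j => homogeneousComponent (f_ j).totalDegree (f_ j)) '' {j | j < i})) :
    (∀ (f : MvPolynomial (Fin n) K), f ≠ 0 →
      ∀ h : Fin s → MvPolynomial (Fin n) K,
        f = ∑ i : Fin s, h i * f_ i →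
        (∀ i, (h i * f_ i).totalDegree ≤ f.totalDegree) →
        (∑ i ∈ Finset.univ.filter
              (fun i : Fin s => (h i * f_ i).totalDegree = f.totalDegree),
            homogeneousComponent (h i).totalDegree (h i) *
              homogeneousComponent (f_ i).totalDegree (f_ i)) ≠ 0 ∧
        (∑ i ∈ Finset.univ.filter
              (fun i : Fin s => (h i * f_ i).totalDegree = f.totalDegree),
            homogeneousComponent (h i).totalDegree (h i) *
              homogeneousComponent (f_ i).totalDegree (f_ i)) ∈
          Ideal.span (Set.range (fun j => homogeneousComponent (f_ j).totalDegree (f_ j))) ∧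
        ∃ m : Fin n →₀ ℕ, m ∈ f.support ∧ (∀ m' ∈ f.support, lo.le m' m) ∧
          m ∈ (∑ i ∈ Finset.univ.filter
                (fun i : Fin s => (h i * f_ i).totalDegree = f.totalDegree),
              homogeneousComponent (h i).totalDegree (h i) *
                homogeneousComponent (f_ i).totalDegree (f_ i)).support ∧
          (∀ m' ∈ (∑ i ∈ Finset.univ.filter
                (fun i : Fin s => (h i * f_ i).totalDegree = f.totalDegree),
              homogeneousComponent (h i).totalDegree (h i) *
                homogeneousComponent (f_ i).totalDegree (f_ i)).support, lo.le m' m)) ∧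
    inMon lo (Ideal.span (Set.range f_)) ⊆
      inMon lo (Ideal.span
        (Set.range (fun j => homogeneousComponent (f_ j).totalDegree (f_ j)))) := by
  have htop : ∀ (f : MvPolynomial (Fin n) K) (h : Fin s → MvPolynomial (Fin n) K),
      f = ∑ i, h i * f_ i → (∀ i, (h i * f_ i).totalDegree ≤ f.totalDegree) →
      ∑ i ∈ Finset.univ.filter (fun i : Fin s => (h i * f_ i).totalDegree = f.totalDegree),
        (h i)ʰ * (f_ i)ʰ = fʰ := fun f h hf hle => by
    rw [← homogeneousComponent_sum_mul_of_totalDegree_le hle, ← hf]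
  have hspan : ∀ (t : Finset (Fin s)) (h : Fin s → MvPolynomial (Fin n) K),
      ∑ i ∈ t, (h i)ʰ * (f_ i)ʰ ∈ Ideal.span (Set.range fun j => (f_ j)ʰ) :=
    fun t h => Ideal.sum_mem _ fun i _ => Ideal.mul_mem_left _ _ (Ideal.subset_span ⟨i, rfl⟩)
  refine ⟨fun f hf h hsum hle => ?_, ?_⟩
  · have hg := htop f h hsum hle
    obtain ⟨m, hm⟩ := exists_isLeadingMonomial lo hf
    refine ⟨hg ▸ homogeneousComponent_totalDegree_ne_zero hf, hspan _ h, m, hm.1, hm.2, ?_⟩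
    exact hg ▸ hm.homogeneousComponent_totalDegree hdegcomp
  · rintro m ⟨p, hp, hp0, hm⟩
    obtain ⟨h, hsum, hle⟩ := exists_sum_mul_eq_totalDegree_le_of_mem_span hreg hp
    exact ⟨_, htop p h hsum hle ▸ hspan _ h, homogeneousComponent_totalDegree_ne_zero hp0,
      IsLeadingMonomial.homogeneousComponent_totalDegree hdegcomp hm⟩

/-- Let `f₁,…,f_s` be affine polynomials whose top homogeneous
components `fᵢʰ` form a regular sequence, and let `0 ≠ f ∈ ⟨f₁,…,f_s⟩` with a
representation `f = Σ hᵢ fᵢ`, `deg (hᵢ fᵢ) ≤ deg f`.  Then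
`g = Σ_{deg(hᵢfᵢ) = deg f} hᵢʰ fᵢʰ` is a nonzero element of `⟨f₁ʰ,…,f_sʰ⟩` having the
same DRL leading monomial as `f`; consequently `in(⟨f₁,…,f_s⟩) ⊆ in(⟨f₁ʰ,…,f_sʰ⟩)`. -/
theorem top_component_leading_term
    (K : Type*) [Field K] (n s : ℕ)
    (lo : LinearOrder (Fin n →₀ ℕ))
    -- DRL: a degree-compatible monomial order
    (hdegcomp : ∀ m m' : Fin n →₀ ℕ,
      m.sum (fun _ e => e) < m'.sum (fun _ e => e) → lo.lt m m')
    (hmulcomp : ∀ m m' d : Fin n →₀ ℕ, lo.le m m' → lo.le (m + d) (m' + d))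
    (f_ : Fin s → MvPolynomial (Fin n) K) (hne : ∀ i, f_ i ≠ 0)
    -- the top homogeneous components form a regular sequence
    (hreg : ∀ i : Fin s, ∀ p : MvPolynomial (Fin n) K,
      p * homogeneousComponent (f_ i).totalDegree (f_ i) ∈
        Ideal.span ((fun j => homogeneousComponent (f_ j).totalDegree (f_ j)) '' {j | j < i}) →
      p ∈ Ideal.span
        ((fun j => homogeneousComponent (f_ j).totalDegree (f_ j)) '' {j | j < i})) :
    (∀ (f : MvPolynomial (Fin n) K), f ≠ 0 →
      ∀ h : Fin s → MvPolynomial (Fin n) K,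
        f = ∑ i : Fin s, h i * f_ i →
        (∀ i, (h i * f_ i).totalDegree ≤ f.totalDegree) →
        (∑ i ∈ Finset.univ.filter
              (fun i : Fin s => (h i * f_ i).totalDegree = f.totalDegree),
            homogeneousComponent (h i).totalDegree (h i) *
              homogeneousComponent (f_ i).totalDegree (f_ i)) ≠ 0 ∧
        (∑ i ∈ Finset.univ.filter
              (fun i : Fin s => (h i * f_ i).totalDegree = f.totalDegree),
            homogeneousComponent (h i).totalDegree (h i) *
              homogeneousComponent (f_ i).totalDegree (f_ i)) ∈
          Ideal.span (Set.range (fun j => homogeneousComponent (f_ j).totalDegree (f_ j))) ∧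
        ∃ m : Fin n →₀ ℕ, m ∈ f.support ∧ (∀ m' ∈ f.support, lo.le m' m) ∧
          m ∈ (∑ i ∈ Finset.univ.filter
                (fun i : Fin s => (h i * f_ i).totalDegree = f.totalDegree),
              homogeneousComponent (h i).totalDegree (h i) *
                homogeneousComponent (f_ i).totalDegree (f_ i)).support ∧
          (∀ m' ∈ (∑ i ∈ Finset.univ.filter
                (fun i : Fin s => (h i * f_ i).totalDegree = f.totalDegree),
              homogeneousComponent (h i).totalDegree (h i) *
                homogeneousComponent (f_ i).totalDegree (f_ i)).support, lo.le m' m)) ∧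
    inMon lo (Ideal.span (Set.range f_)) ⊆
      inMon lo (Ideal.span
        (Set.range (fun j => homogeneousComponent (f_ j).totalDegree (f_ j)))) :=
  top_component_leading_term_general K n s lo hdegcomp f_ hreg
end
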